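/- Let (k_1,ℓ_1) and (k_2,ℓ_2) be pairs of positive integers with k_1 > k_2, 2 ≤ ℓ_1 < ℓ_2 and k_i+ℓ_i ≤ n for i = 1,2. Let u be a squarefree monomial of S = K[x_1,…,x_n] of degree ℓ_1 with m(u) = k_1+ℓ_1, assume BShad(u)_{(k_2,ℓ_2)} is nonempty, and let v be the smallest element of BShad(u)_{(k_2,ℓ_2)} with respect to the squarefree lexicographic order. If Gap(v) ≠ ∅, then there exists a squarefree monomial w ∈ A^s(k_2,ℓ_2) with w ∉ BShad(u)_{(k_2,ℓ_2)}. -/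

import Mathlib

open Finset

noncomputable section

/-- `m(u)`: the maximal index in the support of a squarefree monomial `u`,
where a squarefree monomial of `K[x_1,…,x_n]` is identified with its support,
a finite set of variable indices (`m(1) = 0`). -/
def mmax (u : Finset ℕ) : ℕ := u.sup id

/-- A squarefree monomial ideal of `K[x_1,…,x_n]`, identified with the (finite) set of
squarefree monomials belonging to it: it is upward closed under divisibility of
squarefree monomials, i.e. under taking supersets inside `{1,…,n}`. -/
def IsSqIdeal (n : ℕ) (I : Finset (Finset ℕ)) : Prop :=
  (∀ u ∈ I, u ⊆ Finset.Icc 1 n) ∧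
    ∀ u ∈ I, ∀ v, u ⊆ v → v ⊆ Finset.Icc 1 n → v ∈ I

/-- `G(I)`: the minimal monomial generators of a squarefree monomial ideal. -/
def gens (I : Finset (Finset ℕ)) : Finset (Finset ℕ) :=
  I.filter fun u => ∀ v ∈ I, v ⊆ u → v = u

/-- `G(I)_ℓ`: the degree-`ℓ` minimal generators. -/
def gensDeg (I : Finset (Finset ℕ)) (l : ℕ) : Finset (Finset ℕ) :=
  (gens I).filter fun u => u.card = l

/-- The graded Betti number `β_{k,k+ℓ}(I)` of a squarefree stable ideal, given by the
Aramova–Herzog–Hibi formula (taken as the definition). -/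
def betti (I : Finset (Finset ℕ)) (k l : ℕ) : ℕ :=
  ∑ u ∈ gensDeg I l, (mmax u - l).choose k

/-- `β_{k,k+ℓ}(I)` is an extremal Betti number. -/
def IsExtremal (I : Finset (Finset ℕ)) (k l : ℕ) : Prop :=
  betti I k l ≠ 0 ∧ ∀ i j, k ≤ i → l ≤ j → (i, j) ≠ (k, l) → betti I i j = 0

/-- `C(I)`: the set of corners of `I`. -/
def corners (I : Finset (Finset ℕ)) : Set (ℕ × ℕ) :=
  {p | IsExtremal I p.1 p.2}

/-- squarefree stable ideal. -/
def IsSqStable (n : ℕ) (I : Finset (Finset ℕ)) : Prop :=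
  IsSqIdeal n I ∧
    ∀ u ∈ gens I, ∀ j, 1 ≤ j → j < mmax u → j ∉ u →
      insert j (u.erase (mmax u)) ∈ I

/-- squarefree strongly stable ideal. -/
def IsSqStronglyStable (n : ℕ) (I : Finset (Finset ℕ)) : Prop :=
  IsSqIdeal n I ∧
    ∀ u ∈ gens I, ∀ i ∈ u, ∀ j, 1 ≤ j → j < i → j ∉ u →
      insert j (u.erase i) ∈ I

/-- `u >_slex v` for squarefree monomials of the same degree: at the first position where
the increasing index sequences differ, `u` has the smaller index; equivalently the least
element of the symmetric difference belongs to `u`. -/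
def slexGT (u v : Finset ℕ) : Prop :=
  u ≠ v ∧ sInf {a : ℕ | a ∈ symmDiff u v} ∈ u

/-- `u ≥_slex v`. -/
def slexGE (u v : Finset ℕ) : Prop := u = v ∨ slexGT u v

/-- `A^s(k,ℓ)`: the squarefree monomials of `K[x_1,…,x_n]` of degree `ℓ` with `m(u) = k+ℓ`. -/
def Asf (n k l : ℕ) : Finset (Finset ℕ) :=
  (Finset.Icc 1 n).powerset.filter fun u => u.card = l ∧ mmax u = k + l

/-- The set of gaps of a squarefree monomial `u`, recorded by the element of `u`
immediately preceding each gap. -/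
def gapSet (u : Finset ℕ) : Finset ℕ :=
  u.filter fun a => a < mmax u ∧ a + 1 ∉ u

/-- The width of the gap of `u` starting right after `a`. -/
def gapWidth (u : Finset ℕ) (a : ℕ) : ℕ :=
  sInf {b : ℕ | b ∈ u ∧ a < b} - a - 1

/-- The squarefree shadow of a set `T` of squarefree monomials:
`Shad(T) = {x_i u : u ∈ T, i ∉ supp u, i = 1,…,n}`. -/
def shadS (n : ℕ) (T : Set (Finset ℕ)) : Set (Finset ℕ) :=
  {v | ∃ u ∈ T, ∃ i, i ∈ Finset.Icc 1 n ∧ i ∉ u ∧ v = insert i u}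

/-- A squarefree strongly stable set of squarefree monomials. -/
def IsSSSetS (T : Set (Finset ℕ)) : Prop :=
  ∀ u ∈ T, ∀ i ∈ u, ∀ j, 1 ≤ j → j < i → j ∉ u → insert j (u.erase i) ∈ T

/-- Membership in `B(u_1,…,u_r)`, the smallest squarefree strongly stable set
containing the monomials of `U`. -/
inductive BMem (U : Finset (Finset ℕ)) : Finset ℕ → Prop
  | base : ∀ u ∈ U, BMem U u
  | step : ∀ u, BMem U u → ∀ i ∈ u, ∀ j, 1 ≤ j → j < i → j ∉ u →
      BMem U (insert j (u.erase i))

/-- `BShad(u_1,…,u_r)_{(k₂,ℓ₂)}` for monomials `u_1,…,u_r` of degree `ℓ₁`: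
the elements of `Shad^{ℓ₂-ℓ₁}(B(u_1,…,u_r))` with `m(v) ≤ k₂+ℓ₂`. -/
def bshad (n l1 k2 l2 : ℕ) (U : Finset (Finset ℕ)) : Set (Finset ℕ) :=
  {v | v ∈ (shadS n)^[l2 - l1] {u | BMem U u} ∧ mmax v ≤ k2 + l2}

/-- squarefree lexsegment ideal. -/
def IsSqLex (n : ℕ) (I : Finset (Finset ℕ)) : Prop :=
  IsSqIdeal n I ∧
    ∀ u ∈ I, ∀ v, v ⊆ Finset.Icc 1 n → v.card = u.card → slexGT v u → v ∈ I


/-!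
The interval `x_{k₂+1} ⋯ x_{k₂+ℓ₂}` lies in `A^s(k₂,ℓ₂)` and is the slex-smallest squarefree
monomial of degree `ℓ₂` with all indices at most `k₂+ℓ₂`. Every element of `BShad(u)_{(k₂,ℓ₂)}`
is such a monomial, so if the interval belonged to `BShad(u)_{(k₂,ℓ₂)}` it would be its
slex-smallest element `v`; but an interval is gap-free, while `v` has a gap.
-/

theorem BMem.card_eq {U : Finset (Finset ℕ)} {c : ℕ} (hU : ∀ t ∈ U, t.card = c)
    {z : Finset ℕ} (hz : BMem U z) : z.card = c := by
  induction hz with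
  | base t ht => exact hU t ht
  | step t _ i hi j _ _ hjt ih =>
    have : 1 ≤ t.card := card_pos.mpr ⟨i, hi⟩
    rw [card_insert_of_notMem fun h => hjt (mem_of_mem_erase h), card_erase_of_mem hi]
    omega

theorem card_eq_of_mem_shadS_iterate {n c : ℕ} {T : Set (Finset ℕ)}
    (hT : ∀ t ∈ T, t.card = c) (m : ℕ) : ∀ z ∈ (shadS n)^[m] T, z.card = c + m := by
  induction m with
  | zero => simpa using hT
  | succ m ih =>
    intro z hz
    rw [Function.iterate_succ_apply'] at hz
    obtain ⟨t, ht, i, -, hit, rfl⟩ := hz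
    rw [card_insert_of_notMem hit, ih t ht, add_assoc]

theorem card_eq_of_mem_bshad {n l1 k2 l2 : ℕ} {U : Finset (Finset ℕ)}
    (hU : ∀ t ∈ U, t.card = l1) (hl : l1 ≤ l2) {v : Finset ℕ} (hv : v ∈ bshad n l1 k2 l2 U) :
    v.card = l2 := by
  rw [card_eq_of_mem_shadS_iterate (fun _ ht => BMem.card_eq hU ht) _ v hv.1]
  omega

theorem le_mmax {u : Finset ℕ} {a : ℕ} (ha : a ∈ u) : a ≤ mmax u :=
  le_sup (f := id) ha

theorem mmax_Icc {a b : ℕ} (h : a ≤ b) : mmax (Icc a b) = b :=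
  le_antisymm (Finset.sup_le fun _ hx => (mem_Icc.mp hx).2) (le_mmax (right_mem_Icc.mpr h))

theorem gapSet_Icc (a b : ℕ) : gapSet (Icc a b) = ∅ := by
  ext x
  simp only [gapSet, mem_filter, mem_Icc, notMem_empty, iff_false]
  rintro ⟨⟨hax, hxb⟩, hx, hx1⟩
  rw [mmax_Icc (hax.trans hxb)] at hx
  omega

theorem Icc_mem_Asf {n k l : ℕ} (hl : 0 < l) (h : k + l ≤ n) :
    Icc (k + 1) (k + l) ∈ Asf n k l := by
  rw [Asf, mem_filter, mem_powerset, Nat.card_Icc, mmax_Icc (by omega)]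
  refine ⟨fun x hx => ?_, by omega, rfl⟩
  simp only [mem_Icc] at hx ⊢
  omega

theorem sInf_symmDiff_mem {u v : Finset ℕ} (h : u ≠ v) :
    sInf {a : ℕ | a ∈ symmDiff u v} ∈ symmDiff u v :=
  Nat.sInf_mem (nonempty_iff_ne_empty.mpr fun h' => h (symmDiff_eq_bot.mp h'))

theorem slexGT.not_slexGE {u v : Finset ℕ} (h : slexGT u v) : ¬ slexGE v u := by
  obtain ⟨hne, hu⟩ := h
  rintro (rfl | ⟨-, hv⟩)
  · exact hne rfl
  · rw [symmDiff_comm] at hv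
    have := sInf_symmDiff_mem hne
    rw [mem_symmDiff] at this
    tauto

theorem slexGT_Icc {k l : ℕ} {v : Finset ℕ} (hcard : v.card = l) (hle : ∀ b ∈ v, b ≤ k + l)
    (hne : v ≠ Icc (k + 1) (k + l)) : slexGT v (Icc (k + 1) (k + l)) := by
  refine ⟨hne, ?_⟩
  set w := Icc (k + 1) (k + l)
  set a := sInf {a : ℕ | a ∈ symmDiff v w}
  rcases mem_symmDiff.mp (sInf_symmDiff_mem hne) with ⟨hav, -⟩ | ⟨haw, hav⟩
  · exact hav
  · -- `v` and `w` agree below `a`, and `w` contains everything in `[a, k + l]`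
    have hsub : v ⊆ w.erase a := by
      intro b hb
      refine mem_erase.mpr ⟨by rintro rfl; exact hav hb, ?_⟩
      rcases lt_or_ge b a with hba | hab
      · have := Nat.notMem_of_lt_sInf hba
        simp only [Set.mem_ofPred_eq, mem_symmDiff] at this
        tauto
      · exact mem_Icc.mpr ⟨(mem_Icc.mp haw).1.trans hab, hle b hb⟩
    have := card_le_card hsub
    rw [card_erase_of_mem haw, Nat.card_Icc, hcard] at this
    have := mem_Icc.mp haw
    omega

theorem exists_outside_bshad_general (n l1 k2 l2 : ℕ) (hl : l1 < l2) (h2 : k2 + l2 ≤ n)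
    (u : Finset ℕ) (hcard : u.card = l1)
    (v : Finset ℕ) (hv : v ∈ bshad n l1 k2 l2 {u})
    (hvmin : ∀ z ∈ bshad n l1 k2 l2 {u}, slexGE z v)
    (hgap : (gapSet v).Nonempty) :
    ∃ w ∈ Asf n k2 l2, w ∉ bshad n l1 k2 l2 {u} := by
  refine ⟨Icc (k2 + 1) (k2 + l2), Icc_mem_Asf (by omega) h2, fun hw => ?_⟩
  have hvcard : v.card = l2 :=
    card_eq_of_mem_bshad (by simpa using hcard) hl.le hv
  have hne : v ≠ Icc (k2 + 1) (k2 + l2) := by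
    rintro rfl
    simp [gapSet_Icc] at hgap
  exact (slexGT_Icc hvcard (fun b hb => (le_mmax hb).trans hv.2) hne).not_slexGE (hvmin _ hw)

/-- with `(k₁,ℓ₁)`, `(k₂,ℓ₂)` as below and `u` a squarefree monomial of
degree `ℓ₁` with `m(u) = k₁+ℓ₁`, if `v` is the slex-smallest element of
`BShad(u)_{(k₂,ℓ₂)}` and `Gap(v) ≠ ∅`, then some `w ∈ A^s(k₂,ℓ₂)` lies outside
`BShad(u)_{(k₂,ℓ₂)}`. -/
theorem exists_outside_bshad (n k1 l1 k2 l2 : ℕ) (hk2 : 1 ≤ k2) (hk : k2 < k1)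
    (hl1 : 2 ≤ l1) (hl : l1 < l2) (h1 : k1 + l1 ≤ n) (h2 : k2 + l2 ≤ n)
    (u : Finset ℕ) (hu : u ⊆ Finset.Icc 1 n) (hcard : u.card = l1)
    (hm : mmax u = k1 + l1)
    (v : Finset ℕ) (hv : v ∈ bshad n l1 k2 l2 {u})
    (hvmin : ∀ z ∈ bshad n l1 k2 l2 {u}, slexGE z v)
    (hgap : (gapSet v).Nonempty) :
    ∃ w ∈ Asf n k2 l2, w ∉ bshad n l1 k2 l2 {u} :=
  exists_outside_bshad_general n l1 k2 l2 hl h2 u hcard v hv hvmin hgap
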